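/- Let W be a word over {a,b,c,d} representing an element g of the Grigorchuk group G. Then N^{0,0}_{b,c}(W) ≡ β_10(g) modulo 2. -/
import Mathlib


/-!
We model the group `Aut(T)` of automorphisms of the binary rooted tree via portraits:
an automorphism is uniquely determined by the function `List Bool → Bool` recording,
for every vertex `u` (a finite binary word, `false = 0`, `true = 1`), whether the
automorphism is active (i.e. swaps the two subtrees) at `u`.  Under this identification
`α_u(g) = g u`, the section of `g` at `u` is `fun v => g (u ++ v)`, and the group
operation corresponds to composition of tree automorphisms.
-/

/-- Automorphisms of the binary rooted tree, encoded by their portraits. -/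
def AutT : Type := List Bool → Bool

namespace AutT

/-- The section of a tree automorphism at a first-level vertex. -/
def sec (g : AutT) (x : Bool) : AutT := fun u => g (x :: u)

/-- The section of a tree automorphism at an arbitrary vertex `u`. -/
def secAt (g : AutT) (u : List Bool) : AutT := fun v => g (u ++ v)

/-- The activity (decoration of the portrait) of `g` at the vertex `u`:
`α_u(g) = 1` iff `g` is active at `u`. -/
def alpha (g : AutT) (u : List Bool) : Bool := g u

/-- The action of a tree automorphism on the vertices of the tree. -/
def act : AutT → List Bool → List Bool
  | _, [] => []
  | g, x :: u => (xor (g []) x) :: act (sec g x) u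

/-- Auxiliary function defining the product of two tree automorphisms
(`g * h` acts as `g` followed by `h`). -/
def mulAux : List Bool → AutT → AutT → Bool
  | [], g, h => xor (g []) (h [])
  | x :: u, g, h => mulAux u (sec g x) (sec h (xor x (g [])))

instance : Mul AutT := ⟨fun g h u => mulAux u g h⟩

/-- Auxiliary function defining the inverse of a tree automorphism. -/
def invAux : List Bool → AutT → Bool
  | [], g => g []
  | x :: u, g => invAux u (sec g (xor x (g [])))

instance : One AutT := ⟨fun _ => false⟩
instance : Inv AutT := ⟨fun g u => invAux u g⟩

lemma one_apply (u : List Bool) : (1 : AutT) u = false := rfl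

lemma mul_apply_nil (g h : AutT) : (g * h) [] = xor (g []) (h []) := rfl

lemma mul_apply_cons (g h : AutT) (x : Bool) (u : List Bool) :
    (g * h) (x :: u) = (sec g x * sec h (xor x (g []))) u := rfl

lemma sec_mul (g h : AutT) (x : Bool) :
    sec (g * h) x = sec g x * sec h (xor x (g [])) := rfl

lemma sec_one (x : Bool) : sec (1 : AutT) x = 1 := rfl

lemma inv_apply_nil (g : AutT) : (g⁻¹ : AutT) [] = g [] := rfl

lemma sec_inv (g : AutT) (x : Bool) :
    sec (g⁻¹ : AutT) x = (sec g (xor x (g [])))⁻¹ := rfl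

private lemma mul_assoc' (g h k : AutT) : g * h * k = g * (h * k) := by
  funext u
  induction u generalizing g h k with
  | nil => simp [mul_apply_nil, Bool.xor_assoc]
  | cons x u ih =>
      rw [mul_apply_cons, mul_apply_cons, sec_mul, mul_apply_nil, sec_mul, ih,
        Bool.xor_assoc]

private lemma one_mul' (g : AutT) : 1 * g = g := by
  funext u
  induction u generalizing g with
  | nil => simp [mul_apply_nil, one_apply]
  | cons x u ih => rw [mul_apply_cons, sec_one, one_apply, Bool.xor_false, ih]; rfl

private lemma inv_mul_cancel' (g : AutT) : g⁻¹ * g = 1 := by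
  funext u
  induction u generalizing g with
  | nil => simp [mul_apply_nil, inv_apply_nil, one_apply]
  | cons x u ih =>
      rw [mul_apply_cons, inv_apply_nil, sec_inv, ih]; rfl

instance : Group AutT :=
  Group.ofLeftAxioms mul_assoc' one_mul' inv_mul_cancel'

/-- The generator `a = (1,1)σ` of the Grigorchuk group. -/
def genA : AutT := fun u => decide (u = [])

/-- The generators `b`, `c`, `d` of the Grigorchuk group, defined simultaneously:
`bcdAux 0 = b = (a, c)`, `bcdAux 1 = c = (a, d)`, `bcdAux 2 = d = (1, b)`. -/
def bcdAux : Fin 3 → List Bool → Bool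
  | _, [] => false
  | i, false :: u => if i.val = 2 then false else decide (u = [])
  | i, true :: u => bcdAux (i + 1) u

/-- The generator `b = (a, c)` of the Grigorchuk group. -/
def genB : AutT := bcdAux 0

/-- The generator `c = (a, d)` of the Grigorchuk group. -/
def genC : AutT := bcdAux 1

/-- The generator `d = (1, b)` of the Grigorchuk group. -/
def genD : AutT := bcdAux 2

/-- The Grigorchuk group, as a subgroup of the group of binary rooted tree
automorphisms. -/
def Grigorchuk : Subgroup AutT := Subgroup.closure {genA, genB, genC, genD}

/-- `β_{xy}(g) = α_{xy}(g) + α_{x ȳ 0}(g) + α_{x ȳ 1}(g)` (mod 2). -/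
def beta (g : AutT) (x y : Bool) : Bool :=
  xor (g [x, y]) (xor (g [x, !y, false]) (g [x, !y, true]))

end AutT
/-!
Words over the alphabet `{a, b, c, d}`, encoded as lists over `Fin 4`
(`0 = a`, `1 = b`, `2 = c`, `3 = d`).
-/

/-- Is the letter one of the `{b,c}`-letters? -/
def isBC (x : Fin 4) : Bool := decide (x = 1 ∨ x = 2)

/-- The parity (number modulo 2) of occurrences of the letter `a` before position `i`
in the word `W`. -/
def aParity (W : List (Fin 4)) (i : ℕ) : ℕ := (W.take i).count 0 % 2

/-- The number of `{b,c}`-letters of parity `p` occurring before position `i` in `W`. -/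
def NbcBefore (W : List (Fin 4)) (p : ℕ) (i : ℕ) : ℕ :=
  ((Finset.range i).filter fun j => isBC (W.getD j 0) = true ∧ aParity W j = p).card

/-- `N^p_{b,c}(W)`: the number of `{b,c}`-letters of parity `p` in `W`. -/
def Nbc (W : List (Fin 4)) (p : ℕ) : ℕ := NbcBefore W p W.length

/-- `N^{p,q}_{b,c}(W)`: the number of `{b,c}`-letters `ℓ` of parity `p` in `W` such that
the number of `{b,c}`-letters of parity `p̄` appearing before `ℓ` in `W` has parity `q`. -/
def Nbc2 (W : List (Fin 4)) (p q : ℕ) : ℕ :=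
  ((Finset.range W.length).filter fun i =>
    isBC (W.getD i 0) = true ∧ aParity W i = p ∧ NbcBefore W (1 - p) i % 2 = q).card
namespace AutT

/-- The letters `a`, `b`, `c`, `d` as tree automorphisms. -/
def gen : Fin 4 → AutT := ![genA, genB, genC, genD]

end AutT

open AutT


namespace AutT

lemma mul_apply' (g h : AutT) (u : List Bool) : (g * h) u = xor (g u) (h (act g u)) := by
  induction u generalizing g h with
  | nil => rfl
  | cons x u ih =>
      rw [mul_apply_cons, ih]
      simp only [act, sec]
      rw [Bool.xor_comm x (g [])]

lemma act_one' (g : AutT) : act g [true] = [!(g [])] := by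
  simp [act, sec, Bool.xor_true]

lemma act_ten (g : AutT) : act g [true, false] = [!(g []), g [true]] := by
  simp [act, sec, Bool.xor_true, Bool.xor_false]

lemma act_ttf (g : AutT) : act g [true, true, false] = [!(g []), !(g [true]), g [true, true]] := by
  simp [act, sec, Bool.xor_true, Bool.xor_false]

lemma act_ttt (g : AutT) : act g [true, true, true] = [!(g []), !(g [true]), !(g [true, true])] := by
  simp [act, sec, Bool.xor_true, Bool.xor_false]

lemma gen_nil (x : Fin 4) : gen x [] = decide (x = 0) := by
  fin_cases x <;> rfl

lemma gen_one (x : Fin 4) (e : Bool) : gen x [!e] = (isBC x && e) := by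
  fin_cases x <;> cases e <;> rfl

lemma gen_sum (x : Fin 4) (e t s : Bool) :
    xor (gen x [!e, t]) (xor (gen x [!e, !t, s]) (gen x [!e, !t, !s]))
      = (isBC x && (!e && !t)) := by
  fin_cases x <;> cases e <;> cases t <;> cases s <;> rfl

lemma step_nil (g : AutT) (x : Fin 4) :
    (g * gen x) [] = xor (g []) (decide (x = 0)) := by
  rw [mul_apply']
  simp [act, gen_nil]

lemma step_one (g : AutT) (x : Fin 4) :
    (g * gen x) [true] = xor (g [true]) (isBC x && g []) := by
  rw [mul_apply', act_one', gen_one]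

lemma step_beta (g : AutT) (x : Fin 4) :
    beta (g * gen x) true false
      = xor (beta g true false) (isBC x && (!(g []) && !(g [true]))) := by
  simp only [beta, Bool.not_false]
  rw [mul_apply', mul_apply', mul_apply', act_ten, act_ttf, act_ttt]
  rw [← gen_sum x (g []) (g [true]) (g [true, true])]
  cases g [true, false] <;> cases g [true, true, false] <;> cases g [true, true, true] <;>
    cases gen x [!(g []), g [true]] <;>
    cases gen x [!(g []), !(g [true]), g [true, true]] <;>
    cases gen x [!(g []), !(g [true]), !(g [true, true])] <;> rfl

end AutT

lemma aParity_append_le (W : List (Fin 4)) (x : Fin 4) {j : ℕ} (h : j ≤ W.length) :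
    aParity (W ++ [x]) j = aParity W j := by
  unfold aParity
  rw [List.take_append_of_le_length h]

lemma aParity_length (W : List (Fin 4)) : aParity W W.length = W.count 0 % 2 := by
  unfold aParity
  rw [List.take_length]

lemma NbcBefore_append (W : List (Fin 4)) (x : Fin 4) (p : ℕ) {i : ℕ} (h : i ≤ W.length) :
    NbcBefore (W ++ [x]) p i = NbcBefore W p i := by
  unfold NbcBefore
  congr 1
  refine Finset.filter_congr fun j hj => ?_
  rw [Finset.mem_range] at hj
  have hjW : j < W.length := lt_of_lt_of_le hj h
  rw [List.getD_append _ _ _ _ hjW, aParity_append_le W x hjW.le]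

lemma Nbc_append (W : List (Fin 4)) (x : Fin 4) (p : ℕ) :
    Nbc (W ++ [x]) p
      = Nbc W p + (if isBC x = true ∧ W.count 0 % 2 = p then 1 else 0) := by
  have hlen : (W ++ [x]).length = W.length + 1 := by simp
  unfold Nbc
  rw [hlen]
  unfold NbcBefore
  rw [Finset.range_add_one, Finset.filter_insert]
  have hgd : (W ++ [x]).getD W.length 0 = x := by
    rw [List.getD_append_right _ _ _ _ le_rfl]
    simp
  have hap : aParity (W ++ [x]) W.length = W.count 0 % 2 := by
    rw [aParity_append_le W x le_rfl, aParity_length]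
  have hfil : ((Finset.range W.length).filter fun j =>
      isBC ((W ++ [x]).getD j 0) = true ∧ aParity (W ++ [x]) j = p).card
      = NbcBefore W p W.length := by
    rw [← NbcBefore_append W x p le_rfl]; rfl
  by_cases hc : isBC x = true ∧ W.count 0 % 2 = p
  · rw [if_pos (by rw [hgd, hap]; exact hc), if_pos hc,
      Finset.card_insert_of_notMem (by simp), hfil]
    rfl
  · rw [if_neg (by rw [hgd, hap]; exact hc), if_neg hc, hfil, Nat.add_zero]
    rfl

lemma Nbc2_append (W : List (Fin 4)) (x : Fin 4) :
    Nbc2 (W ++ [x]) 0 0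
      = Nbc2 W 0 0 + (if isBC x = true ∧ W.count 0 % 2 = 0 ∧ Nbc W 1 % 2 = 0 then 1 else 0) := by
  have hlen : (W ++ [x]).length = W.length + 1 := by simp
  unfold Nbc2
  rw [hlen, Finset.range_add_one, Finset.filter_insert]
  have hgd : (W ++ [x]).getD W.length 0 = x := by
    rw [List.getD_append_right _ _ _ _ le_rfl]
    simp
  have hap : aParity (W ++ [x]) W.length = W.count 0 % 2 := by
    rw [aParity_append_le W x le_rfl, aParity_length]
  have hnb : NbcBefore (W ++ [x]) (1 - 0) W.length = Nbc W 1 := by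
    rw [NbcBefore_append W x _ le_rfl]; rfl
  have hfil : ((Finset.range W.length).filter fun i =>
        isBC ((W ++ [x]).getD i 0) = true ∧ aParity (W ++ [x]) i = 0 ∧
          NbcBefore (W ++ [x]) (1 - 0) i % 2 = 0).card
      = Nbc2 W 0 0 := by
    unfold Nbc2
    congr 1
    refine Finset.filter_congr fun j hj => ?_
    rw [Finset.mem_range] at hj
    rw [List.getD_append _ _ _ _ hj, aParity_append_le W x hj.le,
      NbcBefore_append W x _ hj.le]
  by_cases hc : isBC x = true ∧ W.count 0 % 2 = 0 ∧ Nbc W 1 % 2 = 0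
  · rw [if_pos (by rw [hgd, hap, hnb]; exact hc), if_pos hc,
      Finset.card_insert_of_notMem (by simp), hfil]
    rfl
  · rw [if_neg (by rw [hgd, hap, hnb]; exact hc), if_neg hc, hfil, Nat.add_zero]
    rfl

lemma key_induction (W : List (Fin 4)) :
    ((W.map gen).prod [] = decide (W.count 0 % 2 = 1)) ∧
    ((W.map gen).prod [true] = decide (Nbc W 1 % 2 = 1)) ∧
    (Nbc2 W 0 0 % 2 = if beta ((W.map gen).prod) true false = true then 1 else 0) := by
  induction W using List.reverseRecOn with
  | nil =>
      refine ⟨rfl, ?_, ?_⟩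
      · simp [Nbc, NbcBefore, one_apply]
      · simp [Nbc2, beta, one_apply]
  | append_singleton W x ih =>
      obtain ⟨ih1, ih2, ih3⟩ := ih
      have hprod : ((W ++ [x]).map gen).prod = (W.map gen).prod * gen x := by
        simp
      have hcount : (W ++ [x]).count 0 = W.count 0 + (if x = 0 then 1 else 0) := by
        simp [List.count_append, List.count_singleton']
      rw [hprod]
      refine ⟨?_, ?_, ?_⟩
      · rw [step_nil, ih1, hcount]
        rcases Nat.mod_two_eq_zero_or_one (W.count 0) with h | h <;>
          by_cases hx : x = 0 <;> simp [hx, Nat.add_mod, h]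
      · rw [step_one, ih2, ih1, Nbc_append]
        rcases Nat.mod_two_eq_zero_or_one (W.count 0) with hc | hc <;>
          rcases Nat.mod_two_eq_zero_or_one (Nbc W 1) with hn | hn <;>
          by_cases hb : isBC x = true <;>
          simp [hb, hc, hn, Nat.add_mod]
      · rw [step_beta, ih1, ih2, Nbc2_append]
        rcases Nat.mod_two_eq_zero_or_one (W.count 0) with hc | hc <;>
          rcases Nat.mod_two_eq_zero_or_one (Nbc W 1) with hn | hn <;>
          by_cases hb : isBC x = true <;>
          rcases Nat.mod_two_eq_zero_or_one (Nbc2 W 0 0) with h2 | h2 <;>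
          cases hbeta : beta ((W.map gen).prod) true false <;>
          simp_all [Nat.add_mod]

/-- If the word `W` over `{a,b,c,d}` represents the element `g` of the
Grigorchuk group, then `N^{0,0}_{b,c}(W) ≡ β₁₀(g)` modulo 2. -/
theorem Nbc2_zero_zero_eq_beta10
    (W : List (Fin 4)) (g : AutT) (hg : g ∈ Grigorchuk)
    (hW : (W.map gen).prod = g) :
    Nbc2 W 0 0 ≡ (if beta g true false = true then 1 else 0) [MOD 2] := by
  subst hW
  have h := (key_induction W).2.2
  unfold Nat.ModEq
  rw [h]
  cases beta ((W.map gen).prod) true false <;> simp
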